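/- The reduced norm form of D is anisotropic over ℚ: if a, b, c, d ∈ ℚ satisfy a² + 3b² − 5c² − 15d² = 0, then a = b = c = d = 0. -/
import Mathlib

lemma zmod5_aux (x y : ZMod 5) (h : x ^ 2 + 3 * y ^ 2 = 0) : x = 0 ∧ y = 0 := by
  revert h; revert x y; decide

lemma dvd5_of (x y : ℤ) (h : ((x : ZMod 5)) ^ 2 + 3 * (y : ZMod 5) ^ 2 = 0) :
    (5 : ℤ) ∣ x ∧ (5 : ℤ) ∣ y := by
  obtain ⟨hx, hy⟩ := zmod5_aux _ _ h
  exact ⟨(ZMod.intCast_zmod_eq_zero_iff_dvd x 5).mp hx,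
    (ZMod.intCast_zmod_eq_zero_iff_dvd y 5).mp hy⟩

lemma int_case : ∀ n : ℕ, ∀ a b c d : ℤ,
    a.natAbs + b.natAbs + c.natAbs + d.natAbs = n →
    a ^ 2 + 3 * b ^ 2 - 5 * c ^ 2 - 15 * d ^ 2 = 0 →
    a = 0 ∧ b = 0 ∧ c = 0 ∧ d = 0 := by
  intro n
  induction n using Nat.strong_induction_on with
  | _ n ih =>
    intro a b c d hm h
    rcases Nat.eq_zero_or_pos n with hn | hn
    · subst hn; omega
    · have hab : ((a : ZMod 5)) ^ 2 + 3 * (b : ZMod 5) ^ 2 = 0 := by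
        have e0 : a ^ 2 + 3 * b ^ 2 = 5 * (c ^ 2 + 3 * d ^ 2) := by linarith
        have := congrArg (Int.cast : ℤ → ZMod 5) e0
        push_cast at this
        rw [this]
        have h5 : (5 : ZMod 5) = 0 := by decide
        rw [h5]; ring
      obtain ⟨⟨a', rfl⟩, ⟨b', rfl⟩⟩ := dvd5_of a b hab
      have e : c ^ 2 + 3 * d ^ 2 = 5 * (a' ^ 2 + 3 * b' ^ 2) := by nlinarith [h]
      have hcd : ((c : ZMod 5)) ^ 2 + 3 * (d : ZMod 5) ^ 2 = 0 := by
        have := congrArg (Int.cast : ℤ → ZMod 5) e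
        push_cast at this
        rw [this]
        have h5 : (5 : ZMod 5) = 0 := by decide
        rw [h5]; ring
      obtain ⟨⟨c', rfl⟩, ⟨d', rfl⟩⟩ := dvd5_of c d hcd
      have h' : a' ^ 2 + 3 * b' ^ 2 - 5 * c' ^ 2 - 15 * d' ^ 2 = 0 := by nlinarith [e]
      have hlt : a'.natAbs + b'.natAbs + c'.natAbs + d'.natAbs < n := by
        norm_num [Int.natAbs_mul] at hm
        omega
      obtain ⟨ha, hb, hc, hd⟩ := ih _ hlt a' b' c' d' rfl h'
      subst ha; subst hb; subst hc; subst hd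
      norm_num

/-- The reduced norm form `a² + 3b² − 5c² − 15d²` of the quaternion
algebra of discriminant 15 is anisotropic over `ℚ`. -/
theorem normForm_disc15_anisotropic (a b c d : ℚ)
    (h : a ^ 2 + 3 * b ^ 2 - 5 * c ^ 2 - 15 * d ^ 2 = 0) :
    a = 0 ∧ b = 0 ∧ c = 0 ∧ d = 0 := by
  set n : ℚ := ((a.den : ℚ)) * b.den * c.den * d.den with hn
  have hn0 : n ≠ 0 := by
    have := a.den_pos; have := b.den_pos; have := c.den_pos; have := d.den_pos
    rw [hn]; positivity
  set A : ℤ := a.num * b.den * c.den * d.den with hA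
  set B : ℤ := (a.den : ℤ) * b.num * c.den * d.den with hB
  set C : ℤ := (a.den : ℤ) * b.den * c.num * d.den with hC
  set D : ℤ := (a.den : ℤ) * b.den * c.den * d.num with hD
  have hden : ∀ q : ℚ, (q.den : ℚ) ≠ 0 := fun q => by
    exact_mod_cast q.den_nz
  have hnum : ∀ q : ℚ, (q.num : ℚ) = q * q.den := fun q => by
    have h1 := Rat.num_div_den q
    rwa [div_eq_iff (hden q)] at h1
  have hAa : (A : ℚ) = a * n := by
    rw [hA, hn]; push_cast; rw [hnum a]; ring
  have hBb : (B : ℚ) = b * n := by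
    rw [hB, hn]; push_cast; rw [hnum b]; ring
  have hCc : (C : ℚ) = c * n := by
    rw [hC, hn]; push_cast; rw [hnum c]; ring
  have hDd : (D : ℚ) = d * n := by
    rw [hD, hn]; push_cast; rw [hnum d]; ring
  have hint : A ^ 2 + 3 * B ^ 2 - 5 * C ^ 2 - 15 * D ^ 2 = 0 := by
    have : (A : ℚ) ^ 2 + 3 * (B : ℚ) ^ 2 - 5 * (C : ℚ) ^ 2 - 15 * (D : ℚ) ^ 2 = 0 := by
      rw [hAa, hBb, hCc, hDd]
      have : (a ^ 2 + 3 * b ^ 2 - 5 * c ^ 2 - 15 * d ^ 2) * n ^ 2 = 0 := by rw [h]; ring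
      linear_combination this
    exact_mod_cast this
  obtain ⟨hA0, hB0, hC0, hD0⟩ := int_case _ A B C D rfl hint
  have ha : a * n = 0 := by rw [← hAa, hA0]; norm_num
  have hb : b * n = 0 := by rw [← hBb, hB0]; norm_num
  have hc : c * n = 0 := by rw [← hCc, hC0]; norm_num
  have hd : d * n = 0 := by rw [← hDd, hD0]; norm_num
  exact ⟨by simpa [hn0] using mul_eq_zero.mp ha |>.resolve_right hn0,
    by simpa [hn0] using mul_eq_zero.mp hb |>.resolve_right hn0,
    by simpa [hn0] using mul_eq_zero.mp hc |>.resolve_right hn0,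
    by simpa [hn0] using mul_eq_zero.mp hd |>.resolve_right hn0⟩
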